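/- The map sending x to the sequence (Λ_n(x))_{n∈ℕ} restricts to a bijection from cs^λ onto cs, from cs₀^λ onto cs₀, and from bs^λ onto bs; moreover for every x ∈ bs^λ one has ‖x‖_{bs^λ} = sup_m |∑_{n=0}^m Λ_n(x)|, i.e. the bs-norm of its image. In particular cs^λ, cs₀^λ and bs^λ are linearly isometric to cs, cs₀ and bs, respectively. -/

import Mathlib

open Filter Topology

/-- `dl l k = λ_k - λ_{k-1}` with the convention `λ_{-1} = 0`. -/
noncomputable def dl (l : ℕ → ℝ) (k : ℕ) : ℝ := l k - (if k = 0 then 0 else l (k - 1))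

/-- `LamT l x n = Λ_n(x) = (1/λ_n) ∑_{k=0}^n (λ_k - λ_{k-1}) x_k`. -/
noncomputable def LamT (l : ℕ → ℝ) (x : ℕ → ℂ) (n : ℕ) : ℂ :=
  (1 / (l n : ℂ)) * ∑ k ∈ Finset.range (n + 1), ((dl l k : ℝ) : ℂ) * x k

/-- `cs`: sequences with convergent partial sums. -/
def csSet : Set (ℕ → ℂ) :=
  {y | ∃ L, Tendsto (fun m => ∑ k ∈ Finset.range (m + 1), y k) atTop (𝓝 L)}

/-- `cs₀`: sequences whose partial sums tend to `0`. -/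
def cs0Set : Set (ℕ → ℂ) :=
  {y | Tendsto (fun m => ∑ k ∈ Finset.range (m + 1), y k) atTop (𝓝 0)}

/-- `bs`: sequences with bounded partial sums. -/
def bsSet : Set (ℕ → ℂ) :=
  {y | ∃ C, ∀ m, ‖∑ k ∈ Finset.range (m + 1), y k‖ ≤ C}

/-- The `bs`-norm: `sup_m |∑_{k=0}^m y_k|`. -/
noncomputable def bsNorm (y : ℕ → ℂ) : ℝ := ⨆ m, ‖∑ k ∈ Finset.range (m + 1), y k‖

/-- `cs^λ = {x : Λx ∈ cs}`. -/
def csLam (l : ℕ → ℝ) : Set (ℕ → ℂ) := {x | LamT l x ∈ csSet}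

/-- `cs₀^λ = {x : Λx ∈ cs₀}`. -/
def cs0Lam (l : ℕ → ℝ) : Set (ℕ → ℂ) := {x | LamT l x ∈ cs0Set}

/-- `bs^λ = {x : Λx ∈ bs}`. -/
def bsLam (l : ℕ → ℝ) : Set (ℕ → ℂ) := {x | LamT l x ∈ bsSet}

/-- The norm on `bs^λ` (also used on `cs^λ` and `cs₀^λ`):
`‖x‖_{bs^λ} = sup_m |∑_{n=0}^m Λ_n(x)|`. -/
noncomputable def bsLamNorm (l : ℕ → ℝ) (x : ℕ → ℂ) : ℝ :=
  ⨆ m, ‖∑ n ∈ Finset.range (m + 1), LamT l x n‖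

/-!
Since `λ_n Λ_n(x) = ∑_{k ≤ n} (λ_k - λ_{k-1}) x_k`, differencing recovers `x` from `Λ x`:
`x_n = (λ_n Λ_n - λ_{n-1} Λ_{n-1}) / (λ_n - λ_{n-1})`, and conversely this formula defines, for
every `y`, a sequence with `Λ x = y`. So `Λ` is a bijection of `ℕ → ℂ`; the spaces `cs^λ`, `cs₀^λ`,
`bs^λ` are the preimages of `cs`, `cs₀`, `bs` under it, and `‖x‖_{bs^λ}` is the `bs`-norm of `Λ x`.
-/

noncomputable def invLamT (l : ℕ → ℝ) (y : ℕ → ℂ) (n : ℕ) : ℂ :=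
  ((l n : ℂ) * y n - (if n = 0 then 0 else (l (n - 1) : ℂ) * y (n - 1))) / (dl l n : ℂ)

lemma dl_succ (l : ℕ → ℝ) (n : ℕ) : dl l (n + 1) = l (n + 1) - l n := by
  simp [dl]

lemma StrictMono.dl_pos {l : ℕ → ℝ} (hmono : StrictMono l) (hpos : 0 < l 0) (k : ℕ) :
    0 < dl l k := by
  cases k with
  | zero => simpa [dl] using hpos
  | succ n => simpa [dl_succ] using hmono n.lt_succ_self

section Inverse

variable {l : ℕ → ℝ}

lemma sum_dl_mul_eq_mul_LamT (hl : ∀ n, l n ≠ 0) (x : ℕ → ℂ) (n : ℕ) :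
    ∑ k ∈ Finset.range (n + 1), (dl l k : ℂ) * x k = l n * LamT l x n := by
  have : (l n : ℂ) ≠ 0 := by exact_mod_cast hl n
  rw [LamT]
  field_simp

lemma invLamT_LamT (hl : ∀ n, l n ≠ 0) (hdl : ∀ n, dl l n ≠ 0) (x : ℕ → ℂ) :
    invLamT l (LamT l x) = x := by
  funext n
  have hdn : (dl l n : ℂ) ≠ 0 := by exact_mod_cast hdl n
  rw [invLamT, ← sum_dl_mul_eq_mul_LamT hl]
  cases n with
  | zero => simp [hdn]
  | succ m =>
    rw [if_neg m.succ_ne_zero, Nat.add_sub_cancel, ← sum_dl_mul_eq_mul_LamT hl,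
      Finset.sum_range_succ _ (m + 1), add_sub_cancel_left, mul_div_cancel_left₀ _ hdn]

lemma sum_dl_mul_invLamT (hdl : ∀ n, dl l n ≠ 0) (y : ℕ → ℂ) (n : ℕ) :
    ∑ k ∈ Finset.range (n + 1), (dl l k : ℂ) * invLamT l y k = l n * y n := by
  have hdk (k : ℕ) : (dl l k : ℂ) ≠ 0 := by exact_mod_cast hdl k
  induction n with
  | zero => simp [invLamT, mul_div_cancel₀ _ (hdk 0)]
  | succ m ih =>
    rw [Finset.sum_range_succ, ih, invLamT, if_neg m.succ_ne_zero, Nat.add_sub_cancel,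
      mul_div_cancel₀ _ (hdk (m + 1))]
    ring

lemma LamT_invLamT (hl : ∀ n, l n ≠ 0) (hdl : ∀ n, dl l n ≠ 0) (y : ℕ → ℂ) :
    LamT l (invLamT l y) = y := by
  funext n
  have : (l n : ℂ) ≠ 0 := by exact_mod_cast hl n
  rw [LamT, sum_dl_mul_invLamT hdl]
  field_simp

lemma LamT_bijective (hl : ∀ n, l n ≠ 0) (hdl : ∀ n, dl l n ≠ 0) :
    Function.Bijective (LamT l) :=
  Function.bijective_iff_has_inverse.mpr
    ⟨invLamT l, invLamT_LamT hl hdl, LamT_invLamT hl hdl⟩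

end Inverse

theorem stmt1_general (l : ℕ → ℝ) (hmono : StrictMono l) (hpos : 0 < l 0) :
    Set.BijOn (fun x => LamT l x) (csLam l) csSet ∧
    Set.BijOn (fun x => LamT l x) (cs0Lam l) cs0Set ∧
    Set.BijOn (fun x => LamT l x) (bsLam l) bsSet ∧
    ∀ x ∈ bsLam l, bsLamNorm l x = bsNorm (LamT l x) := by
  have hbij : Function.Bijective (LamT l) :=
    LamT_bijective (fun n => (hpos.trans_le (hmono.monotone n.zero_le)).ne')
      (fun n => (hmono.dl_pos hpos n).ne')
  exact ⟨hbij.bijOn_preimage, hbij.bijOn_preimage, hbij.bijOn_preimage, fun x _ => rfl⟩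

theorem stmt1 (l : ℕ → ℝ) (hmono : StrictMono l) (hpos : 0 < l 0)
    (hlim : Tendsto l atTop atTop) :
    Set.BijOn (fun x => LamT l x) (csLam l) csSet ∧
    Set.BijOn (fun x => LamT l x) (cs0Lam l) cs0Set ∧
    Set.BijOn (fun x => LamT l x) (bsLam l) bsSet ∧
    ∀ x ∈ bsLam l, bsLamNorm l x = bsNorm (LamT l x) :=
  stmt1_general l hmono hpos
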